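/- Under the hypotheses of the completion-of-squares identity, the disturbance v*(t) = -γ⁻²B₁(t)ᵀ[P(t)x(t) + η(t)] minimizes the functional v ↦ ∫₀ᵀ [γ²|v(t)|² - ⟨Q(t)ᵀQ(t)x^v(t), x^v(t)⟩] dt over all continuous disturbances, where x^v denotes the solution of ẋ = (A+B)x + B₁v + σ with fixed initial condition x(0) = x₀, and the minimal value is ⟨P(0)x₀, x₀⟩ + 2⟨η(0), x₀⟩ + ∫₀ᵀ [2⟨η, σ⟩ - γ⁻²|B₁ᵀη|²] dt. -/

import Mathlib

/-!
Completion of squares. Along any solution `x` of `ẋ = (A+B)x + B₁v + σ`, the Riccati equation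
for `P` and the adjoint equation for `η` turn the derivative of the storage function
`V(t) = ⟨P(t)x(t), x(t)⟩ + 2⟨η(t), x(t)⟩` into
`-V̇ = γ²|v|² - ⟨QᵀQx, x⟩ - γ²|v - v*|² - (2⟨η, σ⟩ - γ⁻²|B₁ᵀη|²)` with
`v* = -γ⁻²B₁ᵀ(Px + η)`. Integrating over `[0, T]` with `P(T) = 0`, `η(T) = 0` gives
`J(v) = V(0) + γ²∫|v - v*|² + ∫(2⟨η, σ⟩ - γ⁻²|B₁ᵀη|²)`, and the square vanishes for `v = v*`.
-/

open Matrix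

theorem Matrix.mulVec_dotProduct_eq_dotProduct_transpose_mulVec {ι κ R : Type*} [Fintype ι]
    [Fintype κ] [CommSemiring R] (M : Matrix ι κ R) (u : κ → R) (w : ι → R) :
    (M *ᵥ u) ⬝ᵥ w = u ⬝ᵥ (Mᵀ *ᵥ w) := by
  rw [dotProduct_transpose_mulVec, dotProduct_comm]

theorem riccati_completion_of_squares {K ι κ : Type*} [Field K] [Fintype ι] [Fintype κ] {γ : K}
    (hγ : γ ≠ 0) {p p' a q : Matrix ι ι K} {b : Matrix ι κ K} {e e' s x x' : ι → K} {v w : κ → K}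
    (hp : pᵀ = p)
    (hric : p' + p * a + aᵀ * p - qᵀ * q - (γ ^ 2)⁻¹ • (p * b * bᵀ * p) = 0)
    (he : e' + (a - (γ ^ 2)⁻¹ • (b * bᵀ * p))ᵀ *ᵥ e + p *ᵥ s = 0)
    (hx' : x' = a *ᵥ x + b *ᵥ v + s) (hw : w = v + (γ ^ 2)⁻¹ • (bᵀ *ᵥ (p *ᵥ x + e))) :
    -((p' *ᵥ x + p *ᵥ x') ⬝ᵥ x + (p *ᵥ x) ⬝ᵥ x' + 2 * (e' ⬝ᵥ x + e ⬝ᵥ x'))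
      = γ ^ 2 * (v ⬝ᵥ v) - ((qᵀ * q) *ᵥ x) ⬝ᵥ x - γ ^ 2 * (w ⬝ᵥ w)
        - (2 * (e ⬝ᵥ s) - (γ ^ 2)⁻¹ * ((bᵀ *ᵥ e) ⬝ᵥ (bᵀ *ᵥ e))) := by
  obtain rfl : p' = qᵀ * q + (γ ^ 2)⁻¹ • (p * b * bᵀ * p) - p * a - aᵀ * p := by
    rw [← sub_eq_zero, ← hric]; abel
  obtain rfl : e' = -((a - (γ ^ 2)⁻¹ • (b * bᵀ * p))ᵀ *ᵥ e) - p *ᵥ s := by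
    rw [← sub_eq_zero, ← he]; abel
  have hpr : ∀ u y : ι → K, u ⬝ᵥ (p *ᵥ y) = y ⬝ᵥ (p *ᵥ u) := fun u y => by
    rw [← dotProduct_transpose_mulVec, hp]
  subst hx' hw
  simp only [add_mulVec, sub_mulVec, smul_mulVec, mulVec_add, ← mulVec_mulVec,
    transpose_sub, transpose_smul, transpose_mul, transpose_transpose, hp,
    dotProduct_add, add_dotProduct, sub_dotProduct,
    dotProduct_smul, smul_dotProduct, neg_dotProduct, smul_eq_mul]
  have hbr : ∀ u y, u ⬝ᵥ (b *ᵥ y) = y ⬝ᵥ (bᵀ *ᵥ u) := fun u y => by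
    rw [dotProduct_comm, mulVec_dotProduct_eq_dotProduct_transpose_mulVec]
  -- move every matrix onto the second factor of its dot product, then order the factors
  simp only [mulVec_dotProduct_eq_dotProduct_transpose_mulVec, transpose_transpose, hp]
  simp only [hpr, hbr, dotProduct_comm]
  field_simp
  ring

theorem HasDerivAt.dotProduct {𝕜 ι : Type*} [NontriviallyNormedField 𝕜] [Fintype ι]
    {f g : 𝕜 → ι → 𝕜} {f' g' : ι → 𝕜} {t : 𝕜}
    (hf : HasDerivAt f f' t) (hg : HasDerivAt g g' t) :
    HasDerivAt (fun s => f s ⬝ᵥ g s) (f' ⬝ᵥ g t + f t ⬝ᵥ g') t := by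
  rw [_root_.dotProduct, _root_.dotProduct, ← Finset.sum_add_distrib]
  exact HasDerivAt.fun_sum fun i _ => (hasDerivAt_pi.1 hf i).fun_mul (hasDerivAt_pi.1 hg i)

theorem HasDerivAt.matrix_mulVec {𝕜 ι κ : Type*} [NontriviallyNormedField 𝕜] [Fintype κ]
    {M : 𝕜 → Matrix ι κ 𝕜} {M' : Matrix ι κ 𝕜} {x : 𝕜 → κ → 𝕜} {x' : κ → 𝕜} {t : 𝕜}
    (hM : ∀ i j, HasDerivAt (fun s => M s i j) (M' i j) t) (hx : HasDerivAt x x' t) :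
    HasDerivAt (fun s => M s *ᵥ x s) (M' *ᵥ x t + M t *ᵥ x') t :=
  hasDerivAt_pi.2 fun i => (hasDerivAt_pi.2 (hM i)).dotProduct hx

theorem Matrix.continuous_of_hasDerivAt_apply {ι κ : Type*} {M M' : ℝ → Matrix ι κ ℝ}
    (hM : ∀ t i j, HasDerivAt (fun s => M s i j) (M' t i j) t) : Continuous M :=
  continuous_pi fun i => continuous_pi fun j =>
    continuous_iff_continuousAt.2 fun t => (hM t i j).continuousAt

def storage {ι : Type*} [Fintype ι] (P : Matrix ι ι ℝ) (η x : ι → ℝ) : ℝ :=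
  (P *ᵥ x) ⬝ᵥ x + 2 * (η ⬝ᵥ x)

section CompletionOfSquares

variable {ι κ : Type*} [Fintype ι] [Fintype κ] {γ : ℝ} {A Q P : ℝ → Matrix ι ι ℝ}
  {B₁ : ℝ → Matrix ι κ ℝ} {σ η x : ℝ → ι → ℝ} {v : ℝ → κ → ℝ}

theorem hasDerivAt_neg_storage {t : ℝ} {p' : Matrix ι ι ℝ} {e' : ι → ℝ} (hγ : γ ≠ 0)
    (hP : (P t)ᵀ = P t) (hPd : ∀ i j, HasDerivAt (fun s => P s i j) (p' i j) t)
    (hric : p' + P t * A t + (A t)ᵀ * P t - (Q t)ᵀ * Q t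
      - (γ ^ 2)⁻¹ • (P t * B₁ t * (B₁ t)ᵀ * P t) = 0)
    (hηd : HasDerivAt η e' t)
    (hη : e' + (A t - (γ ^ 2)⁻¹ • (B₁ t * (B₁ t)ᵀ * P t))ᵀ *ᵥ η t + P t *ᵥ σ t = 0)
    (hx : HasDerivAt x (A t *ᵥ x t + B₁ t *ᵥ v t + σ t) t) :
    HasDerivAt (fun s => -storage (P s) (η s) (x s))
      (γ ^ 2 * (v t ⬝ᵥ v t) - (((Q t)ᵀ * Q t) *ᵥ x t) ⬝ᵥ x t
        - γ ^ 2 * ((v t + (γ ^ 2)⁻¹ • ((B₁ t)ᵀ *ᵥ (P t *ᵥ x t + η t))) ⬝ᵥ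
            (v t + (γ ^ 2)⁻¹ • ((B₁ t)ᵀ *ᵥ (P t *ᵥ x t + η t))))
        - (2 * (η t ⬝ᵥ σ t) - (γ ^ 2)⁻¹ * ((B₁ t)ᵀ *ᵥ η t ⬝ᵥ (B₁ t)ᵀ *ᵥ η t))) t := by
  have hV :=
    ((HasDerivAt.matrix_mulVec hPd hx).dotProduct hx).add ((hηd.dotProduct hx).const_mul 2)
  rw [← riccati_completion_of_squares hγ hP hric hη rfl rfl]
  exact hV.neg

theorem integral_cost_eq_storage_add (T : ℝ) {P' : ℝ → Matrix ι ι ℝ} {η' : ℝ → ι → ℝ} (hγ : γ ≠ 0)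
    (hQ : Continuous Q) (hB₁ : Continuous B₁) (hσ : Continuous σ)
    (hP : ∀ t, (P t)ᵀ = P t) (hPd : ∀ t i j, HasDerivAt (fun s => P s i j) (P' t i j) t)
    (hric : ∀ t, P' t + P t * A t + (A t)ᵀ * P t - (Q t)ᵀ * Q t
      - (γ ^ 2)⁻¹ • (P t * B₁ t * (B₁ t)ᵀ * P t) = 0) (hPT : P T = 0)
    (hηd : ∀ t, HasDerivAt η (η' t) t)
    (hη : ∀ t, η' t + (A t - (γ ^ 2)⁻¹ • (B₁ t * (B₁ t)ᵀ * P t))ᵀ *ᵥ η t + P t *ᵥ σ t = 0)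
    (hηT : η T = 0) (hv : Continuous v)
    (hx : ∀ t, HasDerivAt x (A t *ᵥ x t + B₁ t *ᵥ v t + σ t) t) :
    ∫ t in (0:ℝ)..T, (γ ^ 2 * (v t ⬝ᵥ v t) - (((Q t)ᵀ * Q t) *ᵥ x t) ⬝ᵥ x t)
      = storage (P 0) (η 0) (x 0)
        + (∫ t in (0:ℝ)..T, γ ^ 2 * ((v t + (γ ^ 2)⁻¹ • ((B₁ t)ᵀ *ᵥ (P t *ᵥ x t + η t))) ⬝ᵥ
            (v t + (γ ^ 2)⁻¹ • ((B₁ t)ᵀ *ᵥ (P t *ᵥ x t + η t)))))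
        + ∫ t in (0:ℝ)..T, (2 * (η t ⬝ᵥ σ t) - (γ ^ 2)⁻¹ * ((B₁ t)ᵀ *ᵥ η t ⬝ᵥ (B₁ t)ᵀ *ᵥ η t)) := by
  have hPc : Continuous P := Matrix.continuous_of_hasDerivAt_apply hPd
  have hηc : Continuous η := Differentiable.continuous fun t => (hηd t).differentiableAt
  have hxc : Continuous x := Differentiable.continuous fun t => (hx t).differentiableAt
  have hFTC := intervalIntegral.integral_eq_sub_of_hasDerivAt
    (fun t _ => hasDerivAt_neg_storage hγ (hP t) (hPd t) (hric t) (hηd t) (hη t) (hx t))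
    (Continuous.intervalIntegrable (by fun_prop) 0 T)
  simp only [storage, hPT, hηT, zero_mulVec, zero_dotProduct, mul_zero, add_zero, neg_zero,
    zero_sub, neg_neg] at hFTC
  rw [intervalIntegral.integral_sub _ (Continuous.intervalIntegrable (by fun_prop) 0 T),
    intervalIntegral.integral_sub] at hFTC
  · rw [storage]; linarith
  all_goals exact Continuous.intervalIntegrable (by fun_prop) 0 T

end CompletionOfSquares

theorem stmt3_general {n m : ℕ} (T γ : ℝ) (hT : 0 < T) (hγ : 0 < γ)
    (A B Q : ℝ → Matrix (Fin n) (Fin n) ℝ) (B₁ : ℝ → Matrix (Fin n) (Fin m) ℝ)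
    (σ : ℝ → Fin n → ℝ) (x₀ : Fin n → ℝ)
    (hQ : Continuous Q)
    (hB₁ : Continuous B₁) (hσ : Continuous σ)
    (P P' : ℝ → Matrix (Fin n) (Fin n) ℝ)
    (hPsymm : ∀ t, (P t)ᵀ = P t)
    (hPderiv : ∀ t, ∀ i j, HasDerivAt (fun s => P s i j) (P' t i j) t)
    (hPric : ∀ t, P' t + P t * (A t + B t) + (A t + B t)ᵀ * P t
      - (Q t)ᵀ * Q t - (γ ^ 2)⁻¹ • (P t * B₁ t * (B₁ t)ᵀ * P t) = 0)
    (hPT : P T = 0)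
    (η η' : ℝ → Fin n → ℝ)
    (hηderiv : ∀ t, ∀ i, HasDerivAt (fun s => η s i) (η' t i) t)
    (hηeq : ∀ t, η' t + (A t + B t - (γ ^ 2)⁻¹ • (B₁ t * (B₁ t)ᵀ * P t))ᵀ.mulVec (η t)
      + (P t).mulVec (σ t) = 0)
    (hηT : η T = 0)
    -- the candidate worst-case disturbance and its closed-loop trajectory
    (xstar : ℝ → Fin n → ℝ) (vstar : ℝ → Fin m → ℝ)
    (hvstar : ∀ t, vstar t = -((γ ^ 2)⁻¹ • (B₁ t)ᵀ.mulVec ((P t).mulVec (xstar t) + η t)))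
    (hxstar0 : xstar 0 = x₀)
    (hxstar : ∀ t, ∀ i, HasDerivAt (fun s => xstar s i)
      (((A t + B t).mulVec (xstar t) + (B₁ t).mulVec (vstar t) + σ t) i) t) :
    (∀ (v : ℝ → Fin m → ℝ) (xv : ℝ → Fin n → ℝ), Continuous v → xv 0 = x₀ →
      (∀ t, ∀ i, HasDerivAt (fun s => xv s i)
        (((A t + B t).mulVec (xv t) + (B₁ t).mulVec (v t) + σ t) i) t) →
      (∫ t in (0:ℝ)..T, (γ ^ 2 * dotProduct (vstar t) (vstar t)
          - dotProduct (((Q t)ᵀ * Q t).mulVec (xstar t)) (xstar t))) ≤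
      (∫ t in (0:ℝ)..T, (γ ^ 2 * dotProduct (v t) (v t)
          - dotProduct (((Q t)ᵀ * Q t).mulVec (xv t)) (xv t)))) ∧
    (∫ t in (0:ℝ)..T, (γ ^ 2 * dotProduct (vstar t) (vstar t)
        - dotProduct (((Q t)ᵀ * Q t).mulVec (xstar t)) (xstar t))) =
      dotProduct ((P 0).mulVec x₀) x₀ + 2 * dotProduct (η 0) x₀
      + ∫ t in (0:ℝ)..T, (2 * dotProduct (η t) (σ t)
          - (γ ^ 2)⁻¹ * dotProduct ((B₁ t)ᵀ.mulVec (η t)) ((B₁ t)ᵀ.mulVec (η t))) := by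
  have hη : ∀ t, HasDerivAt η (η' t) t := fun t => hasDerivAt_pi.2 (hηderiv t)
  have cost := fun (v : ℝ → Fin m → ℝ) (x : ℝ → Fin n → ℝ) (hv : Continuous v)
      (hx : ∀ t i, HasDerivAt (fun s => x s i) (((A t + B t) *ᵥ x t + B₁ t *ᵥ v t + σ t) i) t) =>
    integral_cost_eq_storage_add T hγ.ne' hQ hB₁ hσ hPsymm hPderiv hPric hPT hη hηeq hηT hv
      (fun t => hasDerivAt_pi.2 (hx t))
  have hvstar_cont : Continuous vstar := by
    have hPc := Matrix.continuous_of_hasDerivAt_apply hPderiv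
    have hηc : Continuous η := Differentiable.continuous fun t => (hη t).differentiableAt
    have hxc : Continuous xstar := Differentiable.continuous fun t =>
      (hasDerivAt_pi.2 (hxstar t)).differentiableAt
    rw [funext hvstar]
    fun_prop
  have hstar : (∫ t in (0:ℝ)..T, (γ ^ 2 * (vstar t ⬝ᵥ vstar t)
      - (((Q t)ᵀ * Q t) *ᵥ xstar t) ⬝ᵥ xstar t)) = storage (P 0) (η 0) x₀
        + ∫ t in (0:ℝ)..T, (2 * (η t ⬝ᵥ σ t)
          - (γ ^ 2)⁻¹ * ((B₁ t)ᵀ *ᵥ η t ⬝ᵥ (B₁ t)ᵀ *ᵥ η t)) := by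
    rw [cost vstar xstar hvstar_cont hxstar, hxstar0]
    simp only [hvstar, neg_add_cancel, zero_dotProduct, mul_zero,
      intervalIntegral.integral_zero, add_zero]
  refine ⟨fun v x hv hx0 hx => ?_, hstar⟩
  rw [hstar, cost v x hv hx, hx0, add_right_comm]
  exact le_add_of_nonneg_right (intervalIntegral.integral_nonneg hT.le fun t _ =>
    mul_nonneg (sq_nonneg γ) (Fintype.sum_nonneg fun _ => mul_self_nonneg _))

/-- Under the completion-of-squares hypotheses, the disturbance
`v*(t) = -γ⁻²B₁ᵀ[Px*(t) + η(t)]` minimizes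
`v ↦ ∫₀ᵀ [γ²|v|² - ⟨QᵀQ xᵛ, xᵛ⟩] dt` over continuous disturbances (with solutions
starting at `x₀`), and the minimal value is
`⟨P(0)x₀,x₀⟩ + 2⟨η(0),x₀⟩ + ∫₀ᵀ [2⟨η,σ⟩ - γ⁻²|B₁ᵀη|²] dt`. -/
theorem stmt3 {n m : ℕ} (T γ : ℝ) (hT : 0 < T) (hγ : 0 < γ)
    (A B Q : ℝ → Matrix (Fin n) (Fin n) ℝ) (B₁ : ℝ → Matrix (Fin n) (Fin m) ℝ)
    (σ : ℝ → Fin n → ℝ) (x₀ : Fin n → ℝ)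
    (hA : Continuous A) (hB : Continuous B) (hQ : Continuous Q)
    (hB₁ : Continuous B₁) (hσ : Continuous σ)
    (P P' : ℝ → Matrix (Fin n) (Fin n) ℝ)
    (hPsymm : ∀ t, (P t)ᵀ = P t)
    (hPderiv : ∀ t, ∀ i j, HasDerivAt (fun s => P s i j) (P' t i j) t)
    (hPric : ∀ t, P' t + P t * (A t + B t) + (A t + B t)ᵀ * P t
      - (Q t)ᵀ * Q t - (γ ^ 2)⁻¹ • (P t * B₁ t * (B₁ t)ᵀ * P t) = 0)
    (hPT : P T = 0)
    (η η' : ℝ → Fin n → ℝ)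
    (hηderiv : ∀ t, ∀ i, HasDerivAt (fun s => η s i) (η' t i) t)
    (hηeq : ∀ t, η' t + (A t + B t - (γ ^ 2)⁻¹ • (B₁ t * (B₁ t)ᵀ * P t))ᵀ.mulVec (η t)
      + (P t).mulVec (σ t) = 0)
    (hηT : η T = 0)
    -- the candidate worst-case disturbance and its closed-loop trajectory
    (xstar : ℝ → Fin n → ℝ) (vstar : ℝ → Fin m → ℝ)
    (hvstar : ∀ t, vstar t = -((γ ^ 2)⁻¹ • (B₁ t)ᵀ.mulVec ((P t).mulVec (xstar t) + η t)))
    (hxstar0 : xstar 0 = x₀)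
    (hxstar : ∀ t, ∀ i, HasDerivAt (fun s => xstar s i)
      (((A t + B t).mulVec (xstar t) + (B₁ t).mulVec (vstar t) + σ t) i) t) :
    (∀ (v : ℝ → Fin m → ℝ) (xv : ℝ → Fin n → ℝ), Continuous v → xv 0 = x₀ →
      (∀ t, ∀ i, HasDerivAt (fun s => xv s i)
        (((A t + B t).mulVec (xv t) + (B₁ t).mulVec (v t) + σ t) i) t) →
      (∫ t in (0:ℝ)..T, (γ ^ 2 * dotProduct (vstar t) (vstar t)
          - dotProduct (((Q t)ᵀ * Q t).mulVec (xstar t)) (xstar t))) ≤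
      (∫ t in (0:ℝ)..T, (γ ^ 2 * dotProduct (v t) (v t)
          - dotProduct (((Q t)ᵀ * Q t).mulVec (xv t)) (xv t)))) ∧
    (∫ t in (0:ℝ)..T, (γ ^ 2 * dotProduct (vstar t) (vstar t)
        - dotProduct (((Q t)ᵀ * Q t).mulVec (xstar t)) (xstar t))) =
      dotProduct ((P 0).mulVec x₀) x₀ + 2 * dotProduct (η 0) x₀
      + ∫ t in (0:ℝ)..T, (2 * dotProduct (η t) (σ t)
          - (γ ^ 2)⁻¹ * dotProduct ((B₁ t)ᵀ.mulVec (η t)) ((B₁ t)ᵀ.mulVec (η t))) :=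
  stmt3_general T γ hT hγ A B Q B₁ σ x₀ hQ hB₁ hσ P P' hPsymm hPderiv hPric hPT η η' hηderiv hηeq
    hηT xstar vstar hvstar hxstar0 hxstar
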